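/- Let n, k, m be integers with 0 ≤ k ≤ m and 2m < n, let f₀ ∈ A⁰_{n,k}, and set f = ψ_n^{m−k}(f₀) ∈ A_{n,m} ⊆ A_{n+1,m}. Define g₁ = ((m−k+1)/(n−2k+1)) · ( x_{n+1}·f + ψ_n^{m−k+1}(f₀) ) and g₂ = (1/(n−2k+1)) · ( (n−m−k)·x_{n+1}·f − (m−k+1)·ψ_n^{m−k+1}(f₀) ), both elements of A_{n+1,m+1}. Then x_{n+1}·f = g₁ + g₂, g₁ ∈ H^k_{n+1,m+1} = ψ_{n+1}^{m+1−k}(A⁰_{n+1,k}), and g₂ ∈ H^{k+1}_{n+1,m+1} = ψ_{n+1}^{m−k}(A⁰_{n+1,k+1}). -/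

import Mathlib

open MvPolynomial Finset

noncomputable section

/-- The "square-free monomial" `x_I = ∏_{i ∈ I} x_i`. -/
def xI (n : ℕ) (I : Finset (Fin n)) : MvPolynomial (Fin n) ℂ := ∏ i ∈ I, X i

/-- `A_{n,k}`: the span of the square-free monomials of degree `k`. -/
def Aspace (n k : ℕ) : Submodule ℂ (MvPolynomial (Fin n) ℂ) :=
  Submodule.span ℂ {f | ∃ I : Finset (Fin n), I.card = k ∧ f = xI n I}

/-- The coefficient `c_I` of the monomial `x_I` in `f`. -/
def coeffI {n : ℕ} (f : MvPolynomial (Fin n) ℂ) (I : Finset (Fin n)) : ℂ :=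
  MvPolynomial.coeff (∑ i ∈ I, Finsupp.single i 1) f

/-- `A⁰_{n,k}`: elements `∑ c_I x_I` of `A_{n,k}` with `∑_{j ∉ J} c_{J ∪ {j}} = 0`
for every `(k-1)`-element subset `J`. -/
def A0space (n k : ℕ) : Submodule ℂ (MvPolynomial (Fin n) ℂ) where
  carrier := {f | f ∈ Aspace n k ∧ ∀ J : Finset (Fin n), J.card = k - 1 →
    ∑ j ∈ Jᶜ, coeffI f (insert j J) = 0}
  add_mem' := by
    rintro f g ⟨hf1, hf2⟩ ⟨hg1, hg2⟩
    refine ⟨Submodule.add_mem _ hf1 hg1, fun J hJ => ?_⟩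
    have h1 := hf2 J hJ
    have h2 := hg2 J hJ
    simp only [coeffI] at h1 h2 ⊢
    simp only [coeff_add]
    rw [Finset.sum_add_distrib, h1, h2, add_zero]
  zero_mem' := by
    refine ⟨Submodule.zero_mem _, fun J hJ => ?_⟩
    simp [coeffI]
  smul_mem' := by
    rintro c f ⟨hf1, hf2⟩
    refine ⟨Submodule.smul_mem _ c hf1, fun J hJ => ?_⟩
    have h1 := hf2 J hJ
    simp only [coeffI] at h1 ⊢
    simp only [coeff_smul, smul_eq_mul]
    rw [← Finset.mul_sum, h1, mul_zero]

/-- `ψ_n^l`, the linear map sending the square-free monomial `x_I` to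
`x_I · ∑_S x_S`, the sum over all `l`-element subsets `S` of `{1,…,n} \ I`. -/
def psi (n l : ℕ) : MvPolynomial (Fin n) ℂ →ₗ[ℂ] MvPolynomial (Fin n) ℂ :=
  ∑ S ∈ Finset.univ.filter (fun S : Finset (Fin n) => S.card = l),
    (LinearMap.mulRight ℂ (xI n S)).comp
      (aeval (fun i : Fin n => if i ∈ S then 0 else X i) :
        MvPolynomial (Fin n) ℂ →ₐ[ℂ] MvPolynomial (Fin n) ℂ).toLinearMap

/-- `H^k_{n,m} = ψ_n^{m-k}(A⁰_{n,k})`. -/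
def Hspace (n m k : ℕ) : Submodule ℂ (MvPolynomial (Fin n) ℂ) :=
  (A0space n k).map (psi n (m - k))

/-- The squared norm of a form: the monomials `x_I` are an orthonormal basis. -/
def sqNorm {n : ℕ} (f : MvPolynomial (Fin n) ℂ) : ℝ :=
  ∑ d ∈ f.support, Complex.normSq (f.coeff d)

/-- The inner product of two forms: the monomials `x_I` are an orthonormal basis. -/
def pInner {n : ℕ} (f g : MvPolynomial (Fin n) ℂ) : ℂ :=
  ∑ d ∈ f.support, f.coeff d * (starRingEnd ℂ) (g.coeff d)

/-- The embedding `A_{n,m} ⊆ A_{n+1,m}` via `Fin.castSucc`. -/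
def emb (n : ℕ) : MvPolynomial (Fin n) ℂ →ₐ[ℂ] MvPolynomial (Fin (n + 1)) ℂ :=
  rename Fin.castSucc

/-! ### Auxiliary machinery -/

/-- The exponent finsupp of a square-free monomial. -/
def dI {n : ℕ} (T : Finset (Fin n)) : Fin n →₀ ℕ := ∑ i ∈ T, Finsupp.single i 1

lemma dI_apply {n : ℕ} (T : Finset (Fin n)) (j : Fin n) :
    dI T j = if j ∈ T then 1 else 0 := by
  classical
  simp only [dI, Finsupp.finset_sum_apply, Finsupp.single_apply]
  split_ifs with h
  · rw [Finset.sum_eq_single_of_mem j h (by intro b _ hb; simp [hb]) ]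
    simp
  · exact Finset.sum_eq_zero (by intro b hb; simp [fun hbj : b = j => h (hbj ▸ hb)]; intro hbj; exact absurd (hbj ▸ hb) h)

lemma dI_support {n : ℕ} (T : Finset (Fin n)) : (dI T).support = T := by
  ext j; simp [Finsupp.mem_support_iff, dI_apply]

lemma dI_inj {n : ℕ} {T T' : Finset (Fin n)} (h : dI T = dI T') : T = T' := by
  rw [← dI_support T, ← dI_support T', h]

lemma dI_insert {n : ℕ} {T : Finset (Fin n)} {j : Fin n} (hj : j ∉ T) :
    dI (insert j T) = Finsupp.single j 1 + dI T := by
  rw [dI, Finset.sum_insert hj]; rfl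

lemma dI_erase {n : ℕ} (T : Finset (Fin n)) (j : Fin n) (hj : j ∈ T) :
    dI T - Finsupp.single j 1 = dI (T.erase j) := by
  ext i
  rw [Finsupp.coe_tsub, Pi.sub_apply]
  rw [dI_apply, dI_apply, Finsupp.single_apply]
  by_cases hij : i = j
  · subst hij; simp [hj]
  · rw [if_neg (fun h : j = i => hij h.symm)]
    simp [Finset.mem_erase, hij]

lemma coeffI_def {n : ℕ} (f : MvPolynomial (Fin n) ℂ) (T : Finset (Fin n)) :
    coeffI f T = MvPolynomial.coeff (dI T) f := rfl

lemma xI_eq_monomial (n : ℕ) (I : Finset (Fin n)) :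
    xI n I = monomial (dI I) 1 := by
  classical
  induction I using Finset.induction_on with
  | empty => simp [xI, dI]
  | insert _ _ h ih =>
    rw [xI, Finset.prod_insert h, ← xI, ih, dI_insert h, X, monomial_mul, one_mul]

lemma coeffI_xI (n : ℕ) (I T : Finset (Fin n)) :
    coeffI (xI n I) T = if I = T then 1 else 0 := by
  rw [coeffI_def, xI_eq_monomial, coeff_monomial]
  congr 1
  simp only [eq_iff_iff]
  constructor
  · exact fun h => dI_inj h
  · rintro rfl; rfl

/-- The substitution that kills the variables in `S`. -/
def kill {n : ℕ} (S : Finset (Fin n)) : MvPolynomial (Fin n) ℂ →ₐ[ℂ] MvPolynomial (Fin n) ℂ :=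
  aeval (fun i : Fin n => if i ∈ S then 0 else X i)

lemma psi_apply (n l : ℕ) (p : MvPolynomial (Fin n) ℂ) :
    psi n l p = ∑ S ∈ Finset.univ.filter (fun S : Finset (Fin n) => S.card = l),
      kill S p * xI n S := by
  rw [psi, LinearMap.sum_apply]
  rfl

lemma kill_monomial {n : ℕ} (S : Finset (Fin n)) (u : Fin n →₀ ℕ) (a : ℂ) :
    kill S (monomial u a) = if ∀ i ∈ S, u i = 0 then monomial u a else 0 := by
  classical
  rw [kill, aeval_monomial]
  split_ifs with h
  · have : (u.prod fun i k => (if i ∈ S then 0 else X i : MvPolynomial (Fin n) ℂ) ^ k)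
        = u.prod fun i k => (X i) ^ k := by
      apply Finsupp.prod_congr
      intro i hi
      have : i ∉ S := fun hiS => (Finsupp.mem_support_iff.mp hi) (h i hiS)
      rw [if_neg this]
    rw [this, monomial_eq, algebraMap_eq]
  · push_neg at h
    obtain ⟨i, hiS, hui⟩ := h
    have hsupp : i ∈ u.support := Finsupp.mem_support_iff.mpr hui
    rw [Finsupp.prod]
    rw [Finset.prod_eq_zero hsupp (by rw [if_pos hiS]; exact zero_pow hui)]
    rw [mul_zero]

lemma coeff_kill {n : ℕ} (S : Finset (Fin n)) (d : Fin n →₀ ℕ) (f : MvPolynomial (Fin n) ℂ)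
    (hd : ∀ i ∈ S, d i = 0) :
    MvPolynomial.coeff d (kill S f) = MvPolynomial.coeff d f := by
  classical
  induction f using MvPolynomial.induction_on' with
  | monomial u a =>
    rw [kill_monomial]
    split_ifs with h
    · rfl
    · rw [coeff_zero, coeff_monomial]
      split_ifs with hud
      · exfalso; subst hud; exact h hd
      · rfl
  | add p q hp hq => rw [map_add, coeff_add, coeff_add, hp, hq]

lemma kill_xI {n : ℕ} (S I : Finset (Fin n)) :
    kill S (xI n I) = if Disjoint S I then xI n I else 0 := by
  rw [xI_eq_monomial, kill_monomial]
  congr 1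
  simp only [eq_iff_iff, Finset.disjoint_left]
  constructor
  · intro h i hiS hiI; have := h i hiS; rw [dI_apply, if_pos hiI] at this; exact one_ne_zero this
  · intro h i hiS; rw [dI_apply, if_neg (fun hiI => h hiS hiI)]

lemma kill_kill {n : ℕ} (S T : Finset (Fin n)) (p : MvPolynomial (Fin n) ℂ) :
    kill S (kill T p) = kill (S ∪ T) p := by
  classical
  induction p using MvPolynomial.induction_on with
  | C a => simp [kill]
  | add p q hp hq => simp only [map_add, hp, hq]
  | mul_X p i hp =>
    simp only [map_mul, hp]
    refine congrArg (kill (S ∪ T) p * ·) ?_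
    by_cases hiT : i ∈ T <;> by_cases hiS : i ∈ S <;>
      simp [kill, aeval_X, hiT, hiS]

lemma kill_X {n : ℕ} (S : Finset (Fin n)) (i : Fin n) :
    kill S (X i) = if i ∈ S then 0 else X i := by
  rw [kill, aeval_X]

/-! ### `Fin (n+1)` finset infrastructure -/

lemma last_not_mem_map {n : ℕ} (T : Finset (Fin n)) :
    Fin.last n ∉ T.map Fin.castSuccEmb := by
  simp only [Finset.mem_map, Fin.coe_castSuccEmb]
  rintro ⟨j, _, hj⟩
  exact absurd hj (Fin.ne_last_of_lt (Fin.castSucc_lt_last j))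

lemma mem_map_castSucc {n : ℕ} (T : Finset (Fin n)) (j : Fin n) :
    Fin.castSucc j ∈ T.map Fin.castSuccEmb ↔ j ∈ T := by
  simp only [Finset.mem_map, Fin.coe_castSuccEmb]
  constructor
  · rintro ⟨i, hi, hij⟩; rwa [← Fin.castSucc_injective n hij]
  · exact fun h => ⟨j, h, rfl⟩

lemma exists_map_of_not_last {n : ℕ} (T : Finset (Fin (n + 1))) (h : Fin.last n ∉ T) :
    ∃ T₀ : Finset (Fin n), T = T₀.map Fin.castSuccEmb ∧ T₀.card = T.card := by
  classical
  have heq : T = (T.preimage Fin.castSucc (Fin.castSucc_injective n).injOn).map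
      Fin.castSuccEmb := by
    ext j
    rcases Fin.eq_castSucc_or_eq_last j with ⟨j₀, rfl⟩ | rfl
    · rw [mem_map_castSucc, Finset.mem_preimage]
    · exact iff_of_false h (last_not_mem_map _)
  exact ⟨_, heq, (Finset.card_map _).symm.trans (congrArg Finset.card heq.symm)⟩

lemma compl_map_castSucc {n : ℕ} (T : Finset (Fin n)) :
    (T.map Fin.castSuccEmb)ᶜ = insert (Fin.last n) (Tᶜ.map Fin.castSuccEmb) := by
  classical
  ext j
  rcases Fin.eq_castSucc_or_eq_last j with ⟨j₀, rfl⟩ | rfl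
  · simp only [Finset.mem_compl, mem_map_castSucc, Finset.mem_insert]
    have : ¬ Fin.castSucc j₀ = Fin.last n := Fin.ne_last_of_lt (Fin.castSucc_lt_last j₀)
    simp [this]
  · exact iff_of_true (Finset.mem_compl.mpr (last_not_mem_map T)) (Finset.mem_insert_self _ _)

/-! ### `kill` and `emb` -/

lemma emb_xI {n : ℕ} (I : Finset (Fin n)) :
    emb n (xI n I) = xI (n + 1) (I.map Fin.castSuccEmb) := by
  rw [emb, xI, map_prod, xI, Finset.prod_map]
  apply Finset.prod_congr rfl
  intro i _
  rw [rename_X]; rfl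

lemma kill_emb_map {n : ℕ} (S : Finset (Fin n)) (p : MvPolynomial (Fin n) ℂ) :
    kill (S.map Fin.castSuccEmb) (emb n p) = emb n (kill S p) := by
  have hfun : ((fun i : Fin (n + 1) => if i ∈ S.map Fin.castSuccEmb then 0 else X i)
        ∘ Fin.castSucc)
      = (fun i : Fin n => rename Fin.castSucc
          (if i ∈ S then (0 : MvPolynomial (Fin n) ℂ) else X i)) := by
    funext j
    rw [Function.comp_apply]
    by_cases h : j ∈ S
    · rw [if_pos ((mem_map_castSucc S j).mpr h), if_pos h, map_zero]
    · rw [if_neg (fun hc => h ((mem_map_castSucc S j).mp hc)), if_neg h, rename_X]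
  rw [kill, emb, aeval_rename, kill, comp_aeval_apply, hfun]

lemma kill_emb_insert_last {n : ℕ} (S : Finset (Fin n)) (p : MvPolynomial (Fin n) ℂ) :
    kill (insert (Fin.last n) (S.map Fin.castSuccEmb)) (emb n p) = emb n (kill S p) := by
  have hmem : ∀ j : Fin n,
      (Fin.castSucc j ∈ insert (Fin.last n) (S.map Fin.castSuccEmb)) ↔ j ∈ S := by
    intro j
    rw [Finset.mem_insert, mem_map_castSucc]
    have : ¬ Fin.castSucc j = Fin.last n := Fin.ne_last_of_lt (Fin.castSucc_lt_last j)
    simp [this]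
  have hfun : ((fun i : Fin (n + 1) =>
          if i ∈ insert (Fin.last n) (S.map Fin.castSuccEmb) then 0 else X i)
        ∘ Fin.castSucc)
      = (fun i : Fin n => rename Fin.castSucc
          (if i ∈ S then (0 : MvPolynomial (Fin n) ℂ) else X i)) := by
    funext j
    rw [Function.comp_apply]
    by_cases h : j ∈ S
    · rw [if_pos ((hmem j).mpr h), if_pos h, map_zero]
    · rw [if_neg (fun hc => h ((hmem j).mp hc)), if_neg h, rename_X]
  rw [kill, emb, aeval_rename, kill, comp_aeval_apply, hfun]

/-! ### Structural lemmas for `psi` -/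

lemma sum_Fc_succ {M : Type*} [AddCommMonoid M] (n l : ℕ) (F : Finset (Fin (n + 1)) → M) :
    ∑ S ∈ Finset.univ.filter (fun S : Finset (Fin (n + 1)) => S.card = l), F S
      = (∑ S ∈ Finset.univ.filter (fun S : Finset (Fin n) => S.card + 1 = l),
          F (insert (Fin.last n) (S.map Fin.castSuccEmb)))
        + ∑ S ∈ Finset.univ.filter (fun S : Finset (Fin n) => S.card = l),
            F (S.map Fin.castSuccEmb) := by
  classical
  rw [← Finset.sum_filter_add_sum_filter_not
    (Finset.univ.filter (fun S : Finset (Fin (n + 1)) => S.card = l))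
    (fun S => Fin.last n ∈ S) F]
  congr 1
  · refine (Finset.sum_nbij' (fun S : Finset (Fin (n + 1)) =>
        (S.erase (Fin.last n)).preimage Fin.castSucc (Fin.castSucc_injective n).injOn)
      (fun S : Finset (Fin n) => insert (Fin.last n) (S.map Fin.castSuccEmb))
      ?_ ?_ ?_ ?_ ?_)
    · intro S hS
      simp only [Finset.mem_filter, Finset.mem_univ, true_and] at hS ⊢
      obtain ⟨hcard, hlast⟩ := hS
      obtain ⟨T₀, hT₀, hTcard⟩ := exists_map_of_not_last (S.erase (Fin.last n))
        (Finset.notMem_erase _ _)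
      have hpre : (S.erase (Fin.last n)).preimage Fin.castSucc
          (Fin.castSucc_injective n).injOn = T₀ := by
        rw [hT₀]
        ext j; rw [Finset.mem_preimage, mem_map_castSucc]
      rw [hpre, hTcard, Finset.card_erase_of_mem hlast, hcard]
      have : 1 ≤ l := by
        rw [← hcard]; exact Finset.card_pos.mpr ⟨_, hlast⟩
      omega
    · intro S hS
      simp only [Finset.mem_filter, Finset.mem_univ, true_and] at hS ⊢
      refine ⟨?_, Finset.mem_insert_self _ _⟩
      rw [Finset.card_insert_of_notMem (last_not_mem_map S), Finset.card_map, hS]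
    · intro S hS
      simp only [Finset.mem_filter, Finset.mem_univ, true_and] at hS
      obtain ⟨hcard, hlast⟩ := hS
      obtain ⟨T₀, hT₀, _⟩ := exists_map_of_not_last (S.erase (Fin.last n))
        (Finset.notMem_erase _ _)
      have hpre : (S.erase (Fin.last n)).preimage Fin.castSucc
          (Fin.castSucc_injective n).injOn = T₀ := by
        rw [hT₀]; ext j; rw [Finset.mem_preimage, mem_map_castSucc]
      rw [hpre, ← hT₀, Finset.insert_erase hlast]
    · intro S _
      have h1 : (insert (Fin.last n) (S.map Fin.castSuccEmb)).erase (Fin.last n)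
          = S.map Fin.castSuccEmb := Finset.erase_insert (last_not_mem_map S)
      rw [h1]
      ext j; rw [Finset.mem_preimage, mem_map_castSucc]
    · intro S hS
      simp only [Finset.mem_filter, Finset.mem_univ, true_and] at hS
      obtain ⟨hcard, hlast⟩ := hS
      obtain ⟨T₀, hT₀, _⟩ := exists_map_of_not_last (S.erase (Fin.last n))
        (Finset.notMem_erase _ _)
      have hpre : (S.erase (Fin.last n)).preimage Fin.castSucc
          (Fin.castSucc_injective n).injOn = T₀ := by
        rw [hT₀]; ext j; rw [Finset.mem_preimage, mem_map_castSucc]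
      rw [hpre, ← hT₀, Finset.insert_erase hlast]
  · refine (Finset.sum_nbij' (fun S : Finset (Fin (n + 1)) =>
        S.preimage Fin.castSucc (Fin.castSucc_injective n).injOn)
      (fun S : Finset (Fin n) => S.map Fin.castSuccEmb) ?_ ?_ ?_ ?_ ?_)
    · intro S hS
      simp only [Finset.mem_filter, Finset.mem_univ, true_and] at hS ⊢
      obtain ⟨hcard, hlast⟩ := hS
      obtain ⟨T₀, hT₀, hTcard⟩ := exists_map_of_not_last S hlast
      have hpre : S.preimage Fin.castSucc (Fin.castSucc_injective n).injOn = T₀ := by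
        rw [hT₀]; ext j; rw [Finset.mem_preimage, mem_map_castSucc]
      rw [hpre, hTcard, hcard]
    · intro S hS
      simp only [Finset.mem_filter, Finset.mem_univ, true_and] at hS ⊢
      rw [Finset.card_map, hS]
      exact ⟨rfl, last_not_mem_map S⟩
    · intro S hS
      simp only [Finset.mem_filter, Finset.mem_univ, true_and] at hS
      obtain ⟨T₀, hT₀, _⟩ := exists_map_of_not_last S hS.2
      have hpre : S.preimage Fin.castSucc (Fin.castSucc_injective n).injOn = T₀ := by
        rw [hT₀]; ext j; rw [Finset.mem_preimage, mem_map_castSucc]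
      rw [hpre, ← hT₀]
    · intro S _
      ext j; rw [Finset.mem_preimage, mem_map_castSucc]
    · intro S hS
      simp only [Finset.mem_filter, Finset.mem_univ, true_and] at hS
      obtain ⟨T₀, hT₀, _⟩ := exists_map_of_not_last S hS.2
      have hpre : S.preimage Fin.castSucc (Fin.castSucc_injective n).injOn = T₀ := by
        rw [hT₀]; ext j; rw [Finset.mem_preimage, mem_map_castSucc]
      rw [hpre, ← hT₀]

lemma psi_zero_apply (n : ℕ) (p : MvPolynomial (Fin n) ℂ) : psi n 0 p = p := by
  classical
  rw [psi_apply]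
  have h : Finset.univ.filter (fun S : Finset (Fin n) => S.card = 0) = {∅} := by
    ext S; simp [Finset.card_eq_zero]
  rw [h, Finset.sum_singleton]
  have h2 : kill (∅ : Finset (Fin n)) p = p := by
    rw [kill]
    have : (fun i : Fin n => if i ∈ (∅ : Finset (Fin n)) then 0 else X i)
        = (X : Fin n → MvPolynomial (Fin n) ℂ) := by
      funext i; simp
    rw [this, aeval_X_left_apply]
  rw [h2, xI, Finset.prod_empty, mul_one]

lemma psi_succ_emb (n l : ℕ) (p : MvPolynomial (Fin n) ℂ) :
    psi (n + 1) (l + 1) (emb n p)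
      = X (Fin.last n) * emb n (psi n l p) + emb n (psi n (l + 1) p) := by
  classical
  rw [psi_apply, sum_Fc_succ]
  congr 1
  · have hfil : Finset.univ.filter (fun S : Finset (Fin n) => S.card + 1 = l + 1)
        = Finset.univ.filter (fun S : Finset (Fin n) => S.card = l) := by
      apply Finset.filter_congr; intro S _; simp
    rw [hfil, psi_apply, map_sum, Finset.mul_sum]
    apply Finset.sum_congr rfl
    intro S _
    rw [kill_emb_insert_last, xI, Finset.prod_insert (last_not_mem_map S), ← xI, ← emb_xI,
      map_mul]
    ring
  · rw [psi_apply, map_sum]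
    apply Finset.sum_congr rfl
    intro S _
    rw [kill_emb_map, ← emb_xI, map_mul]

lemma psi_Xlast (n l : ℕ) (p : MvPolynomial (Fin n) ℂ) :
    psi (n + 1) l (X (Fin.last n) * emb n p) = X (Fin.last n) * emb n (psi n l p) := by
  classical
  rw [psi_apply, sum_Fc_succ]
  have h1 : ∀ S ∈ Finset.univ.filter (fun S : Finset (Fin n) => S.card + 1 = l),
      kill (insert (Fin.last n) (S.map Fin.castSuccEmb)) (X (Fin.last n) * emb n p)
        * xI (n + 1) (insert (Fin.last n) (S.map Fin.castSuccEmb)) = 0 := by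
    intro S _
    rw [map_mul, kill_X, if_pos (Finset.mem_insert_self _ _), zero_mul, zero_mul]
  rw [Finset.sum_congr rfl h1, Finset.sum_const, smul_zero, zero_add]
  rw [psi_apply, map_sum, Finset.mul_sum]
  apply Finset.sum_congr rfl
  intro S _
  rw [map_mul, kill_X, if_neg (last_not_mem_map S), kill_emb_map, ← emb_xI, map_mul]
  ring

lemma psi_one_apply (n : ℕ) (p : MvPolynomial (Fin n) ℂ) :
    psi n 1 p = ∑ j : Fin n, kill {j} p * X j := by
  classical
  rw [psi_apply]
  have h : Finset.univ.filter (fun S : Finset (Fin n) => S.card = 1)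
      = Finset.univ.image (fun j : Fin n => ({j} : Finset (Fin n))) := by
    ext S
    simp only [Finset.mem_filter, Finset.mem_univ, true_and, Finset.mem_image,
      Finset.card_eq_one]
    simp [eq_comm]
  rw [h, Finset.sum_image (by intro a _ b _ hab; exact Finset.singleton_injective hab)]
  apply Finset.sum_congr rfl
  intro j _
  rw [xI, Finset.prod_singleton]

lemma psi_psi_one (n l : ℕ) (p : MvPolynomial (Fin n) ℂ) :
    psi n l (psi n 1 p) = ((l : ℂ) + 1) • psi n (l + 1) p := by
  classical
  rw [psi_one_apply, psi_apply]
  have step1 : ∀ S ∈ Finset.univ.filter (fun S : Finset (Fin n) => S.card = l),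
      kill S (∑ j : Fin n, kill {j} p * X j) * xI n S
        = ∑ j ∈ Sᶜ, kill (insert j S) p * xI n (insert j S) := by
    intro S _
    rw [map_sum, Finset.sum_mul]
    have hterm : ∀ j : Fin n, kill S (kill {j} p * X j) * xI n S
        = if j ∈ S then 0 else kill (insert j S) p * xI n (insert j S) := by
      intro j
      rw [map_mul, kill_kill, kill_X]
      split_ifs with h
      · rw [mul_zero, zero_mul]
      · rw [Finset.union_comm, ← Finset.insert_eq]
        conv_rhs => rw [xI, Finset.prod_insert h, ← xI]
        ring
    rw [Finset.sum_congr rfl (fun j _ => hterm j), Finset.sum_ite,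
      Finset.sum_const_zero, zero_add]
    apply Finset.sum_congr
    · ext j; simp
    · intros; rfl
  rw [Finset.sum_congr rfl step1, Finset.sum_sigma']
  have rhs : ((l : ℂ) + 1) • psi n (l + 1) p
      = ∑ x ∈ (Finset.univ.filter
            (fun U : Finset (Fin n) => U.card = l + 1)).sigma (fun U => U),
          kill x.1 p * xI n x.1 := by
    rw [Finset.sum_sigma, psi_apply, Finset.smul_sum]
    apply Finset.sum_congr rfl
    intro U hU
    simp only [Finset.mem_filter, Finset.mem_univ, true_and] at hU
    dsimp only
    rw [Finset.sum_const, hU, ← Nat.cast_smul_eq_nsmul ℂ]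
    push_cast
    ring_nf
  rw [rhs]
  refine Finset.sum_nbij' (fun x => ⟨insert x.2 x.1, x.2⟩) (fun x => ⟨x.1.erase x.2, x.2⟩)
    ?_ ?_ ?_ ?_ ?_
  · rintro ⟨S, j⟩ hx
    rw [Finset.mem_sigma] at hx ⊢
    obtain ⟨hS, hj⟩ := hx
    simp only [Finset.mem_filter, Finset.mem_univ, true_and] at hS ⊢
    rw [Finset.mem_compl] at hj
    exact ⟨by rw [Finset.card_insert_of_notMem hj, hS], Finset.mem_insert_self _ _⟩
  · rintro ⟨U, j⟩ hx
    rw [Finset.mem_sigma] at hx ⊢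
    obtain ⟨hU, hj⟩ := hx
    simp only [Finset.mem_filter, Finset.mem_univ, true_and] at hU ⊢
    refine ⟨?_, Finset.mem_compl.mpr (Finset.notMem_erase _ _)⟩
    rw [Finset.card_erase_of_mem hj, hU]
    omega
  · rintro ⟨S, j⟩ hx
    rw [Finset.mem_sigma] at hx
    obtain ⟨_, hj⟩ := hx
    rw [Finset.mem_compl] at hj
    simp [Finset.erase_insert hj]
  · rintro ⟨U, j⟩ hx
    rw [Finset.mem_sigma] at hx
    simp [Finset.insert_erase hx.2]
  · rintro ⟨S, j⟩ _
    rfl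

lemma psi_emb_psi_one (n l : ℕ) (p : MvPolynomial (Fin n) ℂ) :
    psi (n + 1) l (emb n (psi n 1 p))
      = (l : ℂ) • (X (Fin.last n) * emb n (psi n l p))
        + ((l : ℂ) + 1) • emb n (psi n (l + 1) p) := by
  cases l with
  | zero =>
    rw [psi_zero_apply]
    simp
  | succ l =>
    rw [psi_succ_emb, psi_psi_one, psi_psi_one, map_smul, map_smul, mul_smul_comm]
    push_cast
    module

/-! ### `Aspace` membership -/

lemma xI_mem_Aspace (n : ℕ) (I : Finset (Fin n)) : xI n I ∈ Aspace n I.card :=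
  Submodule.subset_span ⟨I, rfl, rfl⟩

lemma psi_mem_Aspace {n k : ℕ} (l : ℕ) {f : MvPolynomial (Fin n) ℂ} (hf : f ∈ Aspace n k) :
    psi n l f ∈ Aspace n (k + l) := by
  classical
  induction hf using Submodule.span_induction with
  | mem x hx =>
    obtain ⟨I, hI, rfl⟩ := hx
    rw [psi_apply]
    apply Submodule.sum_mem
    intro S hS
    simp only [Finset.mem_filter, Finset.mem_univ, true_and] at hS
    rw [kill_xI]
    split_ifs with hd
    · have hd' : Disjoint I S := hd.symm
      have : xI n I * xI n S = xI n (I ∪ S) := by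
        rw [xI, xI, xI, ← Finset.prod_union hd']
      rw [this]
      have hcard : (I ∪ S).card = k + l := by
        rw [Finset.card_union_of_disjoint hd', hI, hS]
      exact hcard ▸ xI_mem_Aspace n (I ∪ S)
    · rw [zero_mul]; exact Submodule.zero_mem _
  | zero => rw [map_zero]; exact Submodule.zero_mem _
  | add x y _ _ hx hy => rw [map_add]; exact Submodule.add_mem _ hx hy
  | smul c x _ hx => rw [map_smul]; exact Submodule.smul_mem _ c hx

lemma emb_mem_Aspace {n k : ℕ} {f : MvPolynomial (Fin n) ℂ} (hf : f ∈ Aspace n k) :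
    emb n f ∈ Aspace (n + 1) k := by
  induction hf using Submodule.span_induction with
  | mem x hx =>
    obtain ⟨I, hI, rfl⟩ := hx
    rw [emb_xI]
    have : (I.map Fin.castSuccEmb).card = k := by rw [Finset.card_map, hI]
    exact this ▸ xI_mem_Aspace (n + 1) _
  | zero => rw [map_zero]; exact Submodule.zero_mem _
  | add x y _ _ hx hy => rw [map_add]; exact Submodule.add_mem _ hx hy
  | smul c x _ hx => rw [map_smul]; exact Submodule.smul_mem _ c hx

lemma Xlast_mul_mem_Aspace {n k : ℕ} {f : MvPolynomial (Fin n) ℂ} (hf : f ∈ Aspace n k) :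
    X (Fin.last n) * emb n f ∈ Aspace (n + 1) (k + 1) := by
  induction hf using Submodule.span_induction with
  | mem x hx =>
    obtain ⟨I, hI, rfl⟩ := hx
    rw [emb_xI]
    have hxi : X (Fin.last n) * xI (n + 1) (I.map Fin.castSuccEmb)
        = xI (n + 1) (insert (Fin.last n) (I.map Fin.castSuccEmb)) := by
      rw [xI, xI, Finset.prod_insert (last_not_mem_map I)]
    rw [hxi]
    have : (insert (Fin.last n) (I.map Fin.castSuccEmb)).card = k + 1 := by
      rw [Finset.card_insert_of_notMem (last_not_mem_map I), Finset.card_map, hI]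
    exact this ▸ xI_mem_Aspace (n + 1) _
  | zero => rw [map_zero, mul_zero]; exact Submodule.zero_mem _
  | add x y _ _ hx hy => rw [map_add, mul_add]; exact Submodule.add_mem _ hx hy
  | smul c x _ hx => rw [map_smul, mul_smul_comm]; exact Submodule.smul_mem _ c hx

/-! ### Coefficient lemmas -/

lemma coeffI_smul_sub {n : ℕ} (c : ℂ) (f g : MvPolynomial (Fin n) ℂ) (T : Finset (Fin n)) :
    coeffI (c • f - g) T = c * coeffI f T - coeffI g T := by
  simp [coeffI, coeff_sub, coeff_smul]

lemma dI_map {n : ℕ} (T : Finset (Fin n)) :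
    dI (T.map Fin.castSuccEmb) = Finsupp.mapDomain Fin.castSucc (dI T) := by
  classical
  rw [dI, dI, Finset.sum_map, Finsupp.mapDomain_finset_sum]
  apply Finset.sum_congr rfl
  intro i _
  rw [Finsupp.mapDomain_single]
  rfl

lemma coeffI_emb_map {n : ℕ} (q : MvPolynomial (Fin n) ℂ) (T : Finset (Fin n)) :
    coeffI (emb n q) (T.map Fin.castSuccEmb) = coeffI q T := by
  rw [coeffI_def, coeffI_def, dI_map, emb]
  exact coeff_rename_mapDomain _ (Fin.castSucc_injective n) q (dI T)

lemma coeffI_emb_last {n : ℕ} (q : MvPolynomial (Fin n) ℂ) (T : Finset (Fin (n + 1)))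
    (h : Fin.last n ∈ T) : coeffI (emb n q) T = 0 := by
  rw [coeffI_def, emb]
  apply coeff_rename_eq_zero
  intro u hu
  exfalso
  have h0 : Finsupp.mapDomain Fin.castSucc u (Fin.last n) = 0 :=
    Finsupp.mapDomain_notin_range _ _ (by
      rintro ⟨j, hj⟩
      exact Fin.ne_last_of_lt (Fin.castSucc_lt_last j) hj)
  rw [hu, dI_apply, if_pos h] at h0
  exact one_ne_zero h0

lemma coeffI_Xlast_mul {n : ℕ} (p : MvPolynomial (Fin (n + 1)) ℂ) (T : Finset (Fin (n + 1))) :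
    coeffI (X (Fin.last n) * p) T
      = if Fin.last n ∈ T then coeffI p (T.erase (Fin.last n)) else 0 := by
  classical
  rw [coeffI_def, coeff_X_mul', dI_support]
  split_ifs with h
  · rw [dI_erase _ _ h, coeffI_def]
  · rfl

lemma coeffI_kill {n : ℕ} (S : Finset (Fin n)) (f : MvPolynomial (Fin n) ℂ)
    (T : Finset (Fin n)) (h : ∀ i ∈ S, i ∉ T) :
    coeffI (kill S f) T = coeffI f T := by
  rw [coeffI_def, coeffI_def]
  apply coeff_kill
  intro i hi
  rw [dI_apply, if_neg (h i hi)]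

lemma coeffI_psi_one {n : ℕ} (q : MvPolynomial (Fin n) ℂ) (T : Finset (Fin n)) :
    coeffI (psi n 1 q) T = ∑ j ∈ T, coeffI q (T.erase j) := by
  classical
  rw [psi_one_apply, coeffI_def, coeff_sum]
  have hterm : ∀ j : Fin n, MvPolynomial.coeff (dI T) (kill {j} q * X j)
      = if j ∈ T then coeffI q (T.erase j) else 0 := by
    intro j
    rw [coeff_mul_X', dI_support]
    split_ifs with h
    · rw [dI_erase _ _ h, ← coeffI_def, coeffI_kill]
      intro i hi
      rw [Finset.mem_singleton] at hi
      subst hi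
      exact Finset.notMem_erase _ _
    · rfl
  rw [Finset.sum_congr rfl (fun j _ => hterm j), Finset.sum_ite_mem, Finset.univ_inter]

/-! ### `A0space` membership -/

lemma emb_mem_A0space {n k : ℕ} {f₀ : MvPolynomial (Fin n) ℂ} (hf₀ : f₀ ∈ A0space n k) :
    emb n f₀ ∈ A0space (n + 1) k := by
  classical
  obtain ⟨h1, h2⟩ := hf₀
  refine ⟨emb_mem_Aspace h1, ?_⟩
  intro J hJ
  by_cases hlast : Fin.last n ∈ J
  · apply Finset.sum_eq_zero
    intro j _
    exact coeffI_emb_last _ _ (Finset.mem_insert_of_mem hlast)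
  · obtain ⟨J₀, rfl, hJcard⟩ := exists_map_of_not_last J hlast
    rw [compl_map_castSucc, Finset.sum_insert (last_not_mem_map _)]
    rw [coeffI_emb_last _ _ (Finset.mem_insert_self _ _), zero_add, Finset.sum_map]
    have hterm : ∀ j₀ ∈ J₀ᶜ, coeffI (emb n f₀)
        (insert (Fin.castSuccEmb j₀) (J₀.map Fin.castSuccEmb))
        = coeffI f₀ (insert j₀ J₀) := by
      intro j₀ _
      rw [← Finset.map_insert, coeffI_emb_map]
    rw [Finset.sum_congr rfl hterm]
    exact h2 J₀ (by rw [hJcard, ← hJ, Finset.card_map])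

lemma comb_mem_A0space {n k : ℕ} (hkn : k ≤ n) {f₀ : MvPolynomial (Fin n) ℂ}
    (hf₀ : f₀ ∈ A0space n k) :
    ((n : ℂ) - 2 * k) • (X (Fin.last n) * emb n f₀) - emb n (psi n 1 f₀)
      ∈ A0space (n + 1) (k + 1) := by
  classical
  obtain ⟨h1, h2⟩ := hf₀
  refine ⟨Submodule.sub_mem _ (Submodule.smul_mem _ _ (Xlast_mul_mem_Aspace h1))
    (emb_mem_Aspace (by simpa using psi_mem_Aspace 1 h1)), ?_⟩
  intro J hJ
  rw [Nat.add_sub_cancel] at hJ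
  have hsum : ∀ j ∈ Jᶜ, coeffI
      (((n : ℂ) - 2 * k) • (X (Fin.last n) * emb n f₀) - emb n (psi n 1 f₀)) (insert j J)
      = ((n : ℂ) - 2 * k) * coeffI (X (Fin.last n) * emb n f₀) (insert j J)
        - coeffI (emb n (psi n 1 f₀)) (insert j J) := fun j _ => coeffI_smul_sub _ _ _ _
  rw [Finset.sum_congr rfl hsum, Finset.sum_sub_distrib, ← Finset.mul_sum]
  by_cases hlast : Fin.last n ∈ J
  · obtain ⟨J₁, hJ₁, hJ₁card⟩ := exists_map_of_not_last (J.erase (Fin.last n))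
      (Finset.notMem_erase _ _)
    have hJ₁card' : J₁.card = k - 1 := by
      rw [hJ₁card, Finset.card_erase_of_mem hlast, hJ]
    have hJeq : J = insert (Fin.last n) (J₁.map Fin.castSuccEmb) := by
      rw [← hJ₁, Finset.insert_erase hlast]
    rw [hJeq]
    have hcompl : (insert (Fin.last n) (J₁.map Fin.castSuccEmb))ᶜ
        = J₁ᶜ.map Fin.castSuccEmb := by
      rw [Finset.compl_insert, compl_map_castSucc, Finset.erase_insert (last_not_mem_map _)]
    rw [hcompl, Finset.sum_map, Finset.sum_map]
    have hB : ∀ j₀ ∈ J₁ᶜ, coeffI (emb n (psi n 1 f₀))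
        (insert (Fin.castSuccEmb j₀) (insert (Fin.last n) (J₁.map Fin.castSuccEmb))) = 0 := by
      intro j₀ _
      exact coeffI_emb_last _ _ (Finset.mem_insert_of_mem (Finset.mem_insert_self _ _))
    have hA : ∀ j₀ ∈ J₁ᶜ, coeffI (X (Fin.last n) * emb n f₀)
        (insert (Fin.castSuccEmb j₀) (insert (Fin.last n) (J₁.map Fin.castSuccEmb)))
        = coeffI f₀ (insert j₀ J₁) := by
      intro j₀ _
      have hne : (Fin.castSuccEmb j₀ : Fin (n + 1)) ≠ Fin.last n :=
        Fin.ne_last_of_lt (Fin.castSucc_lt_last j₀)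
      rw [coeffI_Xlast_mul, if_pos (Finset.mem_insert_of_mem (Finset.mem_insert_self _ _)),
        Finset.erase_insert_of_ne hne, Finset.erase_insert (last_not_mem_map _),
        ← Finset.map_insert, coeffI_emb_map]
    rw [Finset.sum_congr rfl hA, Finset.sum_congr rfl hB, Finset.sum_const_zero, sub_zero,
      h2 J₁ hJ₁card', mul_zero]
  · obtain ⟨J₀, rfl, hJ₀card⟩ := exists_map_of_not_last J hlast
    have hJ₀k : J₀.card = k := by
      rw [← Finset.card_map (f := Fin.castSuccEmb)]; exact hJ
    rw [compl_map_castSucc, Finset.sum_insert (last_not_mem_map _),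
      Finset.sum_insert (last_not_mem_map _), Finset.sum_map, Finset.sum_map]
    set c : ℂ := coeffI f₀ J₀ with hc
    -- the `X last` part
    have hA0 : coeffI (X (Fin.last n) * emb n f₀)
        (insert (Fin.last n) (J₀.map Fin.castSuccEmb)) = c := by
      rw [coeffI_Xlast_mul, if_pos (Finset.mem_insert_self _ _),
        Finset.erase_insert (last_not_mem_map _), coeffI_emb_map]
    have hA : ∀ j₀ ∈ J₀ᶜ, coeffI (X (Fin.last n) * emb n f₀)
        (insert (Fin.castSuccEmb j₀) (J₀.map Fin.castSuccEmb)) = 0 := by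
      intro j₀ _
      rw [← Finset.map_insert, coeffI_Xlast_mul, if_neg (last_not_mem_map _)]
    -- the `psi` part
    have hB0 : coeffI (emb n (psi n 1 f₀))
        (insert (Fin.last n) (J₀.map Fin.castSuccEmb)) = 0 :=
      coeffI_emb_last _ _ (Finset.mem_insert_self _ _)
    have hkey : ∀ i ∈ J₀, ∑ j₀ ∈ J₀ᶜ, coeffI f₀ (insert j₀ (J₀.erase i)) = -c := by
      intro i hi
      have h0 := h2 (J₀.erase i) (by rw [Finset.card_erase_of_mem hi, hJ₀k])
      rw [Finset.compl_erase, Finset.sum_insert (by simp [hi]),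
        Finset.insert_erase hi, ← hc] at h0
      linear_combination h0
    have hB : ∀ j₀ ∈ J₀ᶜ, coeffI (emb n (psi n 1 f₀))
        (insert (Fin.castSuccEmb j₀) (J₀.map Fin.castSuccEmb))
        = c + ∑ i ∈ J₀, coeffI f₀ (insert j₀ (J₀.erase i)) := by
      intro j₀ hj₀
      rw [Finset.mem_compl] at hj₀
      rw [← Finset.map_insert, coeffI_emb_map, coeffI_psi_one,
        Finset.sum_insert hj₀, Finset.erase_insert hj₀, ← hc]
      congr 1
      apply Finset.sum_congr rfl
      intro i hi
      rw [Finset.erase_insert_of_ne (fun h => hj₀ (by rw [h]; exact hi))]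
    rw [Finset.sum_congr rfl hA, Finset.sum_congr rfl hB, Finset.sum_const_zero, add_zero,
      hA0, hB0, zero_add, Finset.sum_add_distrib, Finset.sum_const, Finset.card_compl]
    rw [Finset.sum_comm, Finset.sum_congr rfl hkey, Finset.sum_const]
    rw [hJ₀k]
    simp only [Fintype.card_fin, nsmul_eq_mul, smul_eq_mul]
    have hcast : ((n - k : ℕ) : ℂ) = (n : ℂ) - k := by
      push_cast [Nat.cast_sub hkn]; ring
    rw [hcast]
    ring


/-- (Lemma 9, case `ξ_{n+1} = 1`.)  Let `0 ≤ k ≤ m`, `2m < n`, `f₀ ∈ A⁰_{n,k}` and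
`f = ψ_n^{m-k}(f₀) ∈ A_{n,m} ⊆ A_{n+1,m}`.  With
`g₁ = ((m-k+1)/(n-2k+1))·(x_{n+1}·f + ψ_n^{m-k+1}(f₀))` and
`g₂ = (1/(n-2k+1))·((n-m-k)·x_{n+1}·f - (m-k+1)·ψ_n^{m-k+1}(f₀))`,
we have `x_{n+1}·f = g₁ + g₂`, `g₁ ∈ H^k_{n+1,m+1}` and `g₂ ∈ H^{k+1}_{n+1,m+1}`. -/
theorem branching_decomposition_xi_one (n k m : ℕ) (hk : k ≤ m) (hm : 2 * m < n)
    (f₀ : MvPolynomial (Fin n) ℂ) (hf₀ : f₀ ∈ A0space n k) :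
    X (Fin.last n) * emb n (psi n (m - k) f₀) =
        (((m : ℂ) - k + 1) / ((n : ℂ) - 2 * k + 1)) •
          (X (Fin.last n) * emb n (psi n (m - k) f₀) + emb n (psi n (m - k + 1) f₀))
      + ((1 : ℂ) / ((n : ℂ) - 2 * k + 1)) •
          (((n : ℂ) - m - k) • (X (Fin.last n) * emb n (psi n (m - k) f₀))
            - ((m : ℂ) - k + 1) • emb n (psi n (m - k + 1) f₀)) ∧
    (((m : ℂ) - k + 1) / ((n : ℂ) - 2 * k + 1)) •
        (X (Fin.last n) * emb n (psi n (m - k) f₀) + emb n (psi n (m - k + 1) f₀))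
      ∈ Hspace (n + 1) (m + 1) k ∧
    ((1 : ℂ) / ((n : ℂ) - 2 * k + 1)) •
        (((n : ℂ) - m - k) • (X (Fin.last n) * emb n (psi n (m - k) f₀))
          - ((m : ℂ) - k + 1) • emb n (psi n (m - k + 1) f₀))
      ∈ Hspace (n + 1) (m + 1) (k + 1) := by
  have h2k : 2 * k < n := lt_of_le_of_lt (by omega) hm
  have hD : ((n : ℂ) - 2 * k + 1) ≠ 0 := by
    have : ((n : ℂ) - 2 * k + 1) = ((n - 2 * k + 1 : ℕ) : ℂ) := by
      push_cast [Nat.cast_sub (le_of_lt h2k)]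
      ring
    rw [this]
    exact Nat.cast_ne_zero.mpr (by omega)
  refine ⟨?_, ?_, ?_⟩
  · match_scalars
    · linear_combination (-1 : ℂ) * mul_inv_cancel₀ hD
    · ring
  · rw [Hspace]
    have hidx : m + 1 - k = m - k + 1 := by omega
    rw [hidx]
    refine Submodule.mem_map.mpr ⟨(((m : ℂ) - k + 1) / ((n : ℂ) - 2 * k + 1)) • emb n f₀,
      Submodule.smul_mem _ _ (emb_mem_A0space hf₀), ?_⟩
    rw [map_smul, psi_succ_emb]
  · rw [Hspace]
    have hidx : m + 1 - (k + 1) = m - k := by omega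
    rw [hidx]
    refine Submodule.mem_map.mpr ⟨((1 : ℂ) / ((n : ℂ) - 2 * k + 1)) •
        (((n : ℂ) - 2 * k) • (X (Fin.last n) * emb n f₀) - emb n (psi n 1 f₀)),
      Submodule.smul_mem _ _ (comb_mem_A0space (by omega) hf₀), ?_⟩
    rw [map_smul, map_sub, map_smul, psi_Xlast, psi_emb_psi_one, Nat.cast_sub hk]
    match_scalars <;> field_simp <;> ring

end
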